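/- Let K ⊆ ℝ^d be a convex body with 0 ∈ K ⊆ d²B, and let δ > 0 satisfy δd⁴ < 1. Then (1 − δd⁴)·K ⊆ Φ_δ(K) ⊆ K. -/

import Mathlib

/-!
Along the ray through a point `x`, `Φ_δ (t • x) = (t · φ_δ(t‖x‖)) • x`, and `φ_δ` takes values in
`[1 - δ r², 1]`. Since `t ↦ t · φ_δ(t‖x‖)` is continuous, vanishes at `0` and is at least
`1 - δ‖x‖²` at `1`, the intermediate value theorem realises every multiple `c • x` with
`0 ≤ c ≤ 1 - δ‖x‖²` as the image of a point of the segment `[0, x]`, which lies in `K` when `K` is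
star-shaped about `0`; as `‖x‖ ≤ d²`, this includes `c = 1 - δd⁴`. Conversely `Φ_δ x` is itself a multiple `φ • x` with `0 < φ ≤ 1`.
-/

open scoped Pointwise

/-- For `δ > 0`, `φ_δ(r) = 2 / (1 + √(1 + 4δr²))`, the unique positive root of
`φ + δr²φ² = 1`. -/
noncomputable def phi (δ r : ℝ) : ℝ := 2 / (1 + Real.sqrt (1 + 4 * δ * r ^ 2))

/-- The map `Φ_δ : ℝ^d → ℝ^d`, `Φ_δ(x) = φ_δ(|x|) • x`. -/
noncomputable def Phi (δ : ℝ) {d : ℕ} (x : EuclideanSpace ℝ (Fin d)) :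
    EuclideanSpace ℝ (Fin d) := phi δ ‖x‖ • x

open Set Metric

lemma phi_pos (δ r : ℝ) : 0 < phi δ r := by
  unfold phi
  positivity

lemma one_le_sqrt_one_add_mul_sq {δ : ℝ} (r : ℝ) (hδ : 0 ≤ δ) :
    1 ≤ Real.sqrt (1 + 4 * δ * r ^ 2) :=
  Real.one_le_sqrt.mpr (by nlinarith [mul_nonneg hδ (sq_nonneg r)])

lemma phi_le_one {δ : ℝ} (r : ℝ) (hδ : 0 ≤ δ) : phi δ r ≤ 1 := by
  have := one_le_sqrt_one_add_mul_sq r hδ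
  unfold phi
  rw [div_le_one (by linarith)]
  linarith

lemma one_sub_mul_sq_le_phi {δ : ℝ} (r : ℝ) (hδ : 0 ≤ δ) : 1 - δ * r ^ 2 ≤ phi δ r := by
  have hs := one_le_sqrt_one_add_mul_sq r hδ
  have hsq : Real.sqrt (1 + 4 * δ * r ^ 2) ^ 2 = 1 + 4 * δ * r ^ 2 :=
    Real.sq_sqrt (by nlinarith [mul_nonneg hδ (sq_nonneg r)])
  unfold phi
  rw [le_div_iff₀ (by linarith)]
  nlinarith [sq_nonneg (Real.sqrt (1 + 4 * δ * r ^ 2) - 1 - 2 * δ * r ^ 2),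
    mul_nonneg hδ (sq_nonneg r)]

lemma continuous_phi (δ : ℝ) : Continuous (phi δ) := by
  unfold phi
  exact continuous_const.div (by fun_prop) fun r => by positivity

section Phi

variable {d : ℕ} {δ : ℝ}

lemma Phi_smul_of_nonneg (x : EuclideanSpace ℝ (Fin d)) {t : ℝ} (ht : 0 ≤ t) :
    Phi δ (t • x) = (t * phi δ (t * ‖x‖)) • x := by
  rw [Phi, norm_smul, Real.norm_of_nonneg ht, smul_smul, mul_comm]

lemma exists_mem_Icc_Phi_smul_eq (x : EuclideanSpace ℝ (Fin d)) {c : ℝ} (hc₀ : 0 ≤ c)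
    (hc : c ≤ phi δ ‖x‖) : ∃ t ∈ Icc (0 : ℝ) 1, Phi δ (t • x) = c • x := by
  have hcont : Continuous fun t : ℝ => t * phi δ (t * ‖x‖) :=
    continuous_id.mul ((continuous_phi δ).comp (continuous_id.mul continuous_const))
  obtain ⟨t, ht, hct⟩ := intermediate_value_Icc zero_le_one hcont.continuousOn
    (show c ∈ Icc _ _ by simpa using And.intro hc₀ hc)
  exact ⟨t, ht, by rw [Phi_smul_of_nonneg x ht.1, ← hct]⟩

variable {K : Set (EuclideanSpace ℝ (Fin d))}

lemma StarConvex.image_Phi_subset (hK : StarConvex ℝ 0 K) (hδ : 0 ≤ δ) : Phi δ '' K ⊆ K := by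
  rintro _ ⟨x, hx, rfl⟩
  exact hK.smul_mem hx (phi_pos δ ‖x‖).le (phi_le_one ‖x‖ hδ)

lemma StarConvex.smul_subset_image_Phi (hK : StarConvex ℝ 0 K) {R : ℝ}
    (hKR : K ⊆ closedBall 0 R) (hδ : 0 ≤ δ) (hδR : δ * R ^ 2 ≤ 1) :
    (1 - δ * R ^ 2) • K ⊆ Phi δ '' K := by
  rintro _ ⟨x, hx, rfl⟩
  have hxR : ‖x‖ ≤ R := mem_closedBall_zero_iff.mp (hKR hx)
  have hc : 1 - δ * R ^ 2 ≤ phi δ ‖x‖ := by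
    refine le_trans ?_ (one_sub_mul_sq_le_phi ‖x‖ hδ)
    have := pow_le_pow_left₀ (norm_nonneg x) hxR 2
    nlinarith
  obtain ⟨t, ⟨ht₀, ht₁⟩, hPhi⟩ := exists_mem_Icc_Phi_smul_eq x (sub_nonneg.mpr hδR) hc
  exact ⟨t • x, hK.smul_mem hx ht₀ ht₁, hPhi⟩

end Phi

theorem stmt8_general (d : ℕ) (δ : ℝ) (K : Set (EuclideanSpace ℝ (Fin d)))
    (hKconv : Convex ℝ K)
    (h0 : (0 : EuclideanSpace ℝ (Fin d)) ∈ K)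
    (hKB : K ⊆ Metric.closedBall 0 ((d : ℝ) ^ 2))
    (hδ : 0 < δ) (hδ2 : δ * (d : ℝ) ^ 4 < 1) :
    (1 - δ * (d : ℝ) ^ 4) • K ⊆ Phi δ '' K ∧ Phi δ '' K ⊆ K := by
  have hK : StarConvex ℝ 0 K := hKconv.starConvex h0
  have hd : ((d : ℝ) ^ 2) ^ 2 = (d : ℝ) ^ 4 := by ring
  refine ⟨?_, hK.image_Phi_subset hδ.le⟩
  simpa only [hd] using hK.smul_subset_image_Phi hKB hδ.le (hd ▸ hδ2.le)

/-- Let `K ⊆ ℝ^d` be a convex body with `0 ∈ K ⊆ d²B`, and `δ > 0` with `δd⁴ < 1`.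
Then `(1 - δd⁴)·K ⊆ Φ_δ(K) ⊆ K`. -/
theorem stmt8 (d : ℕ) (δ : ℝ) (K : Set (EuclideanSpace ℝ (Fin d)))
    (hKcomp : IsCompact K) (hKconv : Convex ℝ K) (hKint : (interior K).Nonempty)
    (h0 : (0 : EuclideanSpace ℝ (Fin d)) ∈ K)
    (hKB : K ⊆ Metric.closedBall 0 ((d : ℝ) ^ 2))
    (hδ : 0 < δ) (hδ2 : δ * (d : ℝ) ^ 4 < 1) :
    (1 - δ * (d : ℝ) ^ 4) • K ⊆ Phi δ '' K ∧ Phi δ '' K ⊆ K :=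
  stmt8_general d δ K hKconv h0 hKB hδ hδ2
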